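/- Let b, b₂, b₃, b₁ > 0 with b₁ > b₃. The unique solution λ = λ(b₁, b₂) > 0 of b₁·exp(−b x²)/(1 + b₂·erf(√b·x)) − b₃·exp(−x²)/erfc(x) = x is strictly increasing in b₁ (for fixed b₂). -/
import Mathlib

open Real Filter Topology Set MeasureTheory

noncomputable def erf (x : ℝ) : ℝ := (2 / Real.sqrt Real.pi) * ∫ u in (0:ℝ)..x, Real.exp (-u^2)

noncomputable def erfc (x : ℝ) : ℝ := 1 - erf x

lemma gauss_integrable : MeasureTheory.Integrable (fun u : ℝ => Real.exp (-u^2)) := by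
  have := integrable_exp_neg_mul_sq (b := 1) one_pos
  simpa using this

lemma erf_mono {a c : ℝ} (h : a ≤ c) : erf a ≤ erf c := by
  unfold erf
  have hpi : 0 < Real.sqrt Real.pi := Real.sqrt_pos.2 Real.pi_pos
  have hadd : (∫ u in (0:ℝ)..a, Real.exp (-u^2)) + (∫ u in a..c, Real.exp (-u^2))
      = ∫ u in (0:ℝ)..c, Real.exp (-u^2) :=
    intervalIntegral.integral_add_adjacent_intervals
      gauss_integrable.intervalIntegrable gauss_integrable.intervalIntegrable
  have hnn : 0 ≤ ∫ u in a..c, Real.exp (-u^2) :=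
    intervalIntegral.integral_nonneg h (fun u _ => (Real.exp_pos _).le)
  have : (∫ u in (0:ℝ)..a, Real.exp (-u^2)) ≤ ∫ u in (0:ℝ)..c, Real.exp (-u^2) := by
    linarith
  have h2 : (0:ℝ) ≤ 2 / Real.sqrt Real.pi := by positivity
  exact mul_le_mul_of_nonneg_left this h2

lemma erf_nonneg {x : ℝ} (hx : 0 ≤ x) : 0 ≤ erf x := by
  have := erf_mono hx
  simpa [erf] using this

-- erfc x expressed as an integral over Ioi x, for 0 ≤ x
lemma erfc_eq {x : ℝ} (hx : 0 ≤ x) :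
    erfc x = (2 / Real.sqrt Real.pi) * ∫ u in Set.Ioi x, Real.exp (-u^2) := by
  have h1 : (∫ u in Set.Ioi (0:ℝ), Real.exp (-u^2)) = Real.sqrt Real.pi / 2 := by
    have := integral_gaussian_Ioi (1 : ℝ)
    simpa using this
  have hsplit : (∫ u in Set.Ioi (0:ℝ), Real.exp (-u^2))
      = (∫ u in Set.Ioc 0 x, Real.exp (-u^2)) + ∫ u in Set.Ioi x, Real.exp (-u^2) := by
    rw [← MeasureTheory.setIntegral_union]
    · rw [Set.Ioc_union_Ioi_eq_Ioi hx]
    · exact disjoint_left.2 fun u hu hu' => absurd hu.2 (not_le.2 hu')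
    · exact measurableSet_Ioi
    · exact gauss_integrable.integrableOn
    · exact gauss_integrable.integrableOn
  have hintv : (∫ u in (0:ℝ)..x, Real.exp (-u^2)) = ∫ u in Set.Ioc 0 x, Real.exp (-u^2) :=
    intervalIntegral.integral_of_le hx
  have hpi : (0:ℝ) < Real.sqrt Real.pi := Real.sqrt_pos.2 Real.pi_pos
  unfold erfc erf
  rw [hintv]
  have : (∫ u in Set.Ioc 0 x, Real.exp (-u^2))
      = Real.sqrt Real.pi / 2 - ∫ u in Set.Ioi x, Real.exp (-u^2) := by
    rw [← h1, hsplit]; ring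
  rw [this]
  field_simp
  ring

lemma ioi_integral_pos {x : ℝ} : 0 < ∫ u in Set.Ioi x, Real.exp (-u^2) := by
  refine (MeasureTheory.setIntegral_pos_iff_support_of_nonneg_ae ?_ ?_).2 ?_
  · exact Filter.Eventually.of_forall fun u => (Real.exp_pos _).le
  · exact gauss_integrable.integrableOn
  · have : Function.support (fun u : ℝ => Real.exp (-u^2)) = Set.univ := by
      ext u; simp [Function.support, (Real.exp_pos (-u^2)).ne']
    rw [this, Set.univ_inter]
    simp [Real.volume_Ioi]

lemma erfc_pos {x : ℝ} (hx : 0 ≤ x) : 0 < erfc x := by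
  rw [erfc_eq hx]
  have hpi : (0:ℝ) < Real.sqrt Real.pi := Real.sqrt_pos.2 Real.pi_pos
  exact mul_pos (by positivity) ioi_integral_pos

-- Mills ratio monotonicity: for 0 ≤ a ≤ c, exp(-a²)·erfc c ≤ exp(-c²)·erfc a
lemma mills {a c : ℝ} (ha : 0 ≤ a) (h : a ≤ c) :
    Real.exp (-a^2) * erfc c ≤ Real.exp (-c^2) * erfc a := by
  have hc : (0:ℝ) ≤ c := le_trans ha h
  rw [erfc_eq ha, erfc_eq hc]
  set d := c - a with hd
  have hd0 : 0 ≤ d := by simp [hd]; linarith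
  have htrans : (∫ u in Set.Ioi c, Real.exp (-u^2))
      = ∫ v in Set.Ioi a, Real.exp (-(v+d)^2) := by
    have hmp : MeasureTheory.MeasurePreserving (fun v : ℝ => v + d) volume volume :=
      MeasureTheory.measurePreserving_add_right volume d
    have hemb : MeasurableEmbedding (fun v : ℝ => v + d) :=
      (Homeomorph.addRight d).measurableEmbedding
    have := hmp.setIntegral_preimage_emb hemb (fun u => Real.exp (-u^2)) (Set.Ioi c)
    have hset : (fun v : ℝ => v + d) ⁻¹' Set.Ioi c = Set.Ioi a := by
      ext v
      simp only [Set.mem_preimage, Set.mem_Ioi]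
      rw [hd]
      constructor <;> intro h' <;> linarith
    rw [← this, hset]
  rw [htrans]
  have hbound : (∫ v in Set.Ioi a, Real.exp (-(v+d)^2))
      ≤ ∫ v in Set.Ioi a, Real.exp (a^2 - c^2) * Real.exp (-v^2) := by
    apply MeasureTheory.setIntegral_mono_on
    · have : MeasureTheory.Integrable (fun v : ℝ => Real.exp (-(v+d)^2)) := by
        have := gauss_integrable.comp_add_right d
        simpa using this
      exact this.integrableOn
    · exact (gauss_integrable.const_mul _).integrableOn
    · exact measurableSet_Ioi
    · intro v hv
      rw [← Real.exp_add]
      apply Real.exp_le_exp.2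
      have hva : a ≤ v := le_of_lt hv
      nlinarith [mul_le_mul_of_nonneg_left hva hd0]
  rw [MeasureTheory.integral_const_mul] at hbound
  have hpi : (0:ℝ) < Real.sqrt Real.pi := Real.sqrt_pos.2 Real.pi_pos
  have := mul_le_mul_of_nonneg_left hbound (le_of_lt (show (0:ℝ) < Real.exp (-a^2) * (2 / Real.sqrt Real.pi) by positivity))
  calc Real.exp (-a^2) * (2 / Real.sqrt Real.pi * ∫ v in Set.Ioi a, Real.exp (-(v+d)^2))
      ≤ Real.exp (-a^2) * (2 / Real.sqrt Real.pi * (Real.exp (a^2 - c^2) * ∫ v in Set.Ioi a, Real.exp (-v^2))) := by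
        nlinarith [this]
    _ = Real.exp (-c^2) * (2 / Real.sqrt Real.pi * ∫ v in Set.Ioi a, Real.exp (-v^2)) := by
        have hexp : Real.exp (-a^2) * Real.exp (a^2 - c^2) = Real.exp (-c^2) := by
          rw [← Real.exp_add]; congr 1; ring
        rw [← hexp]; ring

theorem lambda_strictMono_in_b1 (b b2 b3 b1 b1' l l' : ℝ)
    (hb : 0 < b) (hb2 : 0 < b2) (hb3 : 0 < b3)
    (h1 : b3 < b1) (h1' : b1 < b1')
    (hl : 0 < l)
    (hfix : b1 * Real.exp (-(b * l^2)) / (1 + b2 * erf (Real.sqrt b * l))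
      - b3 * (Real.exp (-l^2) / erfc l) = l)
    (hl' : 0 < l')
    (hfix' : b1' * Real.exp (-(b * l'^2)) / (1 + b2 * erf (Real.sqrt b * l'))
      - b3 * (Real.exp (-l'^2) / erfc l') = l') :
    l < l' := by
  by_contra hcon
  push_neg at hcon   -- l' ≤ l
  have hb0 : (0:ℝ) < Real.sqrt b := Real.sqrt_pos.2 hb
  -- denominators positive
  have hden : ∀ x : ℝ, 0 < x → 0 < 1 + b2 * erf (Real.sqrt b * x) := by
    intro x hx
    have := erf_nonneg (x := Real.sqrt b * x) (by positivity)
    nlinarith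
  have hdl := hden l hl
  have hdl' := hden l' hl'
  -- monotonicity in b1
  have hA1 : b1 * Real.exp (-(b * l'^2)) / (1 + b2 * erf (Real.sqrt b * l'))
      < b1' * Real.exp (-(b * l'^2)) / (1 + b2 * erf (Real.sqrt b * l')) := by
    apply div_lt_div_of_pos_right _ hdl'
    have : (0:ℝ) < Real.exp (-(b * l'^2)) := Real.exp_pos _
    nlinarith
  -- monotonicity in x
  have hA2 : b1 * Real.exp (-(b * l^2)) / (1 + b2 * erf (Real.sqrt b * l))
      ≤ b1 * Real.exp (-(b * l'^2)) / (1 + b2 * erf (Real.sqrt b * l')) := by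
    have hb1pos : (0:ℝ) < b1 := lt_trans hb3 h1
    apply div_le_div₀ (by positivity) _ hdl'
    · have : erf (Real.sqrt b * l') ≤ erf (Real.sqrt b * l) := by
        apply erf_mono
        nlinarith
      nlinarith
    · have hsq : l'^2 ≤ l^2 := by nlinarith
      have : Real.exp (-(b * l^2)) ≤ Real.exp (-(b * l'^2)) := by
        apply Real.exp_le_exp.2
        nlinarith
      nlinarith
  -- Mills ratio monotone
  have hB : Real.exp (-l'^2) / erfc l' ≤ Real.exp (-l^2) / erfc l := by
    rw [div_le_div_iff₀ (erfc_pos hl'.le) (erfc_pos hl.le)]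
    exact mills hl'.le hcon
  nlinarith [hfix, hfix', hA1, hA2, hB]
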